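/- Let μ ∈ D(B) and f ∈ B. Then f = 0 μ-almost everywhere on X if and only if f̂ = 0 μ̂-almost everywhere on Δ. -/

import Mathlib

open MeasureTheory Filter Topology BoundedContinuousFunction
open scoped ZeroAtInfty ENNReal

/-- The complexification of a bounded real-valued function: we regard a bounded real
function on `X` as a bounded complex function. (`X` carries the discrete topology, so
`X →ᵇ ℝ` is exactly the space of bounded real-valued functions on `X`.) -/
noncomputable def cplx {X : Type*} [TopologicalSpace X] (f : X →ᵇ ℝ) : X →ᵇ ℂ :=
  BoundedContinuousFunction.comp Complex.ofReal Complex.isometry_ofReal.lipschitz f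

/-- `A(B)`: the closure, in the supremum norm, of the complexification `B + iB` of a
set `B` of bounded real-valued functions, inside the C*-algebra of all bounded
complex-valued functions on `X`. -/
noncomputable def AofB {X : Type*} [TopologicalSpace X] (B : Set (X →ᵇ ℝ)) : Set (X →ᵇ ℂ) :=
  closure {a : X →ᵇ ℂ | ∃ f ∈ B, ∃ g ∈ B, a = cplx f + Complex.I • cplx g}

/-!
Both sides are equivalent to the vanishing of one and the same number, `∫ |f| dμ = ∫ |f̂| dμ̂`:
`|f| = max f (-f)` lies in `B`, and its Gelfand transform is `|f̂|`, since the two continuous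
functions agree on the dense image of `X` in `Δ`. A nonnegative integrable function has
integral zero exactly when it vanishes almost everywhere.
-/

section

variable {X : Type*} [TopologicalSpace X]

@[simp]
lemma cplx_apply (f : X →ᵇ ℝ) (x : X) : cplx f x = (f x : ℂ) := rfl

lemma cplx_mem_AofB {B : Set (X →ᵇ ℝ)} (h0B : (0 : X →ᵇ ℝ) ∈ B) {f : X →ᵇ ℝ} (hf : f ∈ B) :
    cplx f ∈ AofB B :=
  subset_closure ⟨f, hf, 0, h0B, by ext x; simp⟩

lemma exists_abs_mem {B : Set (X →ᵇ ℝ)} (hBsmul : ∀ (c : ℝ), ∀ f ∈ B, c • f ∈ B)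
    (hBmax : ∀ f ∈ B, ∀ g ∈ B, ∃ h ∈ B, ∀ x, h x = max (f x) (g x))
    {f : X →ᵇ ℝ} (hf : f ∈ B) : ∃ h ∈ B, ∀ x, h x = |f x| := by
  obtain ⟨h, hhB, hh⟩ := hBmax f hf _ (hBsmul (-1) f hf)
  exact ⟨h, hhB, fun x => by simp [hh, abs_eq_max_neg]⟩

lemma gelfand_cplx_eq_norm_of_eq_abs {Δ : Type*} [TopologicalSpace Δ] [T2Space Δ]
    {B : Set (X →ᵇ ℝ)} (h0B : (0 : X →ᵇ ℝ) ∈ B) {ι : X → Δ} (hι : DenseRange ι)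
    {G : (X →ᵇ ℂ) → C₀(Δ, ℂ)} (hGeval : ∀ a ∈ AofB B, ∀ x : X, G a (ι x) = a x)
    {f h : X →ᵇ ℝ} (hf : f ∈ B) (hhB : h ∈ B) (hh : ∀ x, h x = |f x|) :
    ⇑(G (cplx h)) = fun φ => ((‖G (cplx f) φ‖ : ℝ) : ℂ) :=
  hι.equalizer (map_continuous _) (by fun_prop) <| funext fun x => by
    simp [hGeval _ (cplx_mem_AofB h0B hhB), hGeval _ (cplx_mem_AofB h0B hf), hh]

end

lemma ae_eq_zero_iff_integral_norm_eq_zero {α E : Type*} [MeasurableSpace α] {μ : Measure α}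
    [NormedAddCommGroup E] {F : α → E} (hF : Integrable (fun x => ‖F x‖) μ) :
    (∀ᵐ x ∂μ, F x = 0) ↔ ∫ x, ‖F x‖ ∂μ = 0 := by
  simp [integral_eq_zero_iff_of_nonneg (fun x => norm_nonneg (F x)) hF, EventuallyEq]

theorem ae_zero_iff_gelfand_ae_zero_general {X : Type*} [TopologicalSpace X]
    (B : Set (X →ᵇ ℝ))
    (hBsmul : ∀ (c : ℝ), ∀ f ∈ B, c • f ∈ B)
    (hBmax : ∀ f ∈ B, ∀ g ∈ B, ∃ h ∈ B, ∀ x, h x = max (f x) (g x))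
    {Δ : Type*} [TopologicalSpace Δ] [T2Space Δ]
    [MeasurableSpace Δ]
    (ι : X → Δ) (hι : DenseRange ι)
    (G : (X →ᵇ ℂ) → C₀(Δ, ℂ))
    (hGeval : ∀ a ∈ AofB B, ∀ x : X, G a (ι x) = a x)
    {mX : MeasurableSpace X}
    (μ : Measure X) (hμ : ∀ f ∈ B, Integrable (⇑f) μ)
    (ν : Measure Δ)
    (hν : ∀ f ∈ B, Integrable (fun φ => ((G (cplx f)) φ).re) ν ∧
      ∫ x, f x ∂μ = ∫ φ, ((G (cplx f)) φ).re ∂ν)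
    (f : X →ᵇ ℝ) (hf : f ∈ B) :
    (∀ᵐ x ∂μ, f x = 0) ↔ ∀ᵐ φ ∂ν, (G (cplx f)) φ = 0 := by
  have h0B : (0 : X →ᵇ ℝ) ∈ B := by simpa using hBsmul 0 f hf
  obtain ⟨h, hhB, hh⟩ := exists_abs_mem hBsmul hBmax hf
  have hh_norm : ⇑h = fun x => ‖f x‖ := funext fun x => (hh x).trans (Real.norm_eq_abs _).symm
  have hGh : (fun φ => (G (cplx h) φ).re) = fun φ => ‖G (cplx f) φ‖ := by
    simp [gelfand_cplx_eq_norm_of_eq_abs h0B hι hGeval hf hhB hh]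
  obtain ⟨hintν, hμν⟩ := hν h hhB
  have hintμ := hμ h hhB
  rw [hGh] at hintν hμν
  rw [hh_norm] at hintμ
  rw [ae_eq_zero_iff_integral_norm_eq_zero hintμ, ae_eq_zero_iff_integral_norm_eq_zero hintν,
    ← hμν, hh_norm]

/-- Let `μ ∈ D(B)` with transferred Radon measure `ν = μ̂` on `Δ`, and
let `f ∈ B`.  Then `f = 0` `μ`-a.e. on `X` if and only if `f̂ = 0` `ν`-a.e. on `Δ`. -/
theorem ae_zero_iff_gelfand_ae_zero {X : Type*} [Nonempty X] [TopologicalSpace X] [DiscreteTopology X]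
    (B : Set (X →ᵇ ℝ))
    (hBadd : ∀ f ∈ B, ∀ g ∈ B, f + g ∈ B)
    (hBsmul : ∀ (c : ℝ), ∀ f ∈ B, c • f ∈ B)
    (hBmax : ∀ f ∈ B, ∀ g ∈ B, ∃ h ∈ B, ∀ x, h x = max (f x) (g x))
    (hBmin : ∀ f ∈ B, ∀ g ∈ B, ∃ h ∈ B, ∀ x, h x = min (f x) (g x))
    (hBmul : ∀ f ∈ B, ∀ g ∈ B, f * g ∈ B)
    (hBstone : ∀ f ∈ B, ∃ h ∈ B, ∀ x, h x = min (f x) 1)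
    (hBnv : ∀ x : X, ∃ f ∈ B, f x ≠ 0)
    {Δ : Type*} [TopologicalSpace Δ] [LocallyCompactSpace Δ] [T2Space Δ]
    [MeasurableSpace Δ] [BorelSpace Δ]
    (ι : X → Δ) (hι : DenseRange ι)
    (G : (X →ᵇ ℂ) → C₀(Δ, ℂ))
    (hGeval : ∀ a ∈ AofB B, ∀ x : X, G a (ι x) = a x)
    (hGsurj : ∀ h : C₀(Δ, ℂ), ∃ a ∈ AofB B, G a = h)
    {mX : MeasurableSpace X}
    (hmX : mX = ⨆ f ∈ B, MeasurableSpace.comap (⇑f : X → ℝ) inferInstance)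
    (μ : Measure X) (hμ : ∀ f ∈ B, Integrable (⇑f) μ)
    (ν : Measure Δ) (hνreg : ν.Regular)
    (hν : ∀ f ∈ B, Integrable (fun φ => ((G (cplx f)) φ).re) ν ∧
      ∫ x, f x ∂μ = ∫ φ, ((G (cplx f)) φ).re ∂ν)
    (f : X →ᵇ ℝ) (hf : f ∈ B) :
    (∀ᵐ x ∂μ, f x = 0) ↔ ∀ᵐ φ ∂ν, (G (cplx f)) φ = 0 :=
  ae_zero_iff_gelfand_ae_zero_general B hBsmul hBmax ι hι G hGeval (mX := mX) μ hμ ν hν f hf
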